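/- Let G be a finite simple connected graph of order n, with minimum degree δ and n_e vertices of even degree. Then γ^NN_s(G) ≥ (−(δ + 1) + √((δ + 1)² + 8(nδ + n + n_e)))/2 − n. -/
import Mathlib

open Finset

/-- The closed neighborhood of `v` in `G`, as a `Finset`. -/
def closedNbr {V : Type*} [Fintype V] [DecidableEq V] (G : SimpleGraph V) [DecidableRel G.Adj]
    (v : V) : Finset V := insert v (G.neighborFinset v)

/-- `f` is a nonnegative signed dominating function of `G`:
`f : V → {-1, 1}` and `∑_{u ∈ N[v]} f(u) ≥ 0` for every vertex `v`. -/
def IsNNSDF {V : Type*} [Fintype V] [DecidableEq V] (G : SimpleGraph V) [DecidableRel G.Adj]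
    (f : V → ℤ) : Prop :=
  (∀ v, f v = 1 ∨ f v = -1) ∧ ∀ v, 0 ≤ ∑ u ∈ closedNbr G v, f u

/-- The nonnegative signed domination number `γ^NN_s(G)`. -/
noncomputable def gammaNNs {V : Type*} [Fintype V] [DecidableEq V] (G : SimpleGraph V)
    [DecidableRel G.Adj] : ℤ :=
  sInf {w : ℤ | ∃ f : V → ℤ, IsNNSDF G f ∧ w = ∑ v, f v}

section Aux

variable {V : Type*} [Fintype V] [DecidableEq V] (G : SimpleGraph V) [DecidableRel G.Adj]

lemma closedNbr_card (v : V) : (closedNbr G v).card = G.degree v + 1 := by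
  rw [closedNbr, card_insert_of_notMem (by simp), G.card_neighborFinset_eq_degree]

lemma mem_closedNbr_comm (u v : V) : u ∈ closedNbr G v ↔ v ∈ closedNbr G u := by
  simp only [closedNbr, mem_insert, SimpleGraph.mem_neighborFinset]
  rw [eq_comm, G.adj_comm]

variable {f : V → ℤ}

omit [Fintype V] [DecidableEq V] in
lemma filter_not_one (hf1 : ∀ v, f v = 1 ∨ f v = -1) (s : Finset V) :
    s.filter (fun u => ¬ f u = 1) = s.filter (fun u => f u = -1) := by
  apply filter_congr; intro u _; rcases hf1 u with h | h <;> simp [h]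

lemma sum_pm (hf1 : ∀ v, f v = 1 ∨ f v = -1) (s : Finset V) (g : V → ℤ) :
    ∑ u ∈ s, f u * g u =
      ∑ u ∈ s.filter (fun u => f u = 1), g u - ∑ u ∈ s.filter (fun u => f u = -1), g u := by
  rw [← Finset.sum_filter_add_sum_filter_not s (fun u => f u = 1) (fun u => f u * g u),
    filter_not_one hf1]
  have e1 : ∑ u ∈ s.filter (fun u => f u = 1), f u * g u
      = ∑ u ∈ s.filter (fun u => f u = 1), g u :=
    Finset.sum_congr rfl fun u hu => by rw [(mem_filter.mp hu).2, one_mul]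
  have e2 : ∑ u ∈ s.filter (fun u => f u = -1), f u * g u
      = -∑ u ∈ s.filter (fun u => f u = -1), g u := by
    rw [← Finset.sum_neg_distrib]
    exact Finset.sum_congr rfl fun u hu => by rw [(mem_filter.mp hu).2]; ring
  rw [e1, e2]; ring

lemma sum_eq_cards (hf1 : ∀ v, f v = 1 ∨ f v = -1) (s : Finset V) :
    ∑ u ∈ s, f u =
      ((s.filter (fun u => f u = 1)).card : ℤ) - ((s.filter (fun u => f u = -1)).card : ℤ) := by
  have := sum_pm hf1 s (fun _ => 1)
  simpa using this

lemma card_eq_cards (hf1 : ∀ v, f v = 1 ∨ f v = -1) (s : Finset V) :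
    s.card = (s.filter (fun u => f u = 1)).card + (s.filter (fun u => f u = -1)).card := by
  rw [← card_filter_add_card_filter_not (s := s) (fun u => f u = 1),
    filter_not_one hf1]

end Aux

/-- For a finite simple connected graph `G` of order `n`, minimum degree `δ`
and `n_e` even-degree vertices,
`γ^NN_s(G) ≥ (-(δ+1) + √((δ+1)² + 8(nδ + n + n_e)))/2 - n`. -/
theorem gammaNNs_lower_bound_4 {V : Type*} [Fintype V] [DecidableEq V]
    (G : SimpleGraph V) [DecidableRel G.Adj] (hconn : G.Connected)
    (n nₑ δ : ℕ) (hn : n = Fintype.card V) (hδ : δ = G.minDegree)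
    (hne : nₑ = (univ.filter fun v => Even (G.degree v)).card) :
    (-((δ : ℝ) + 1) + Real.sqrt (((δ : ℝ) + 1) ^ 2 + 8 * ((n : ℝ) * δ + n + nₑ))) / 2 - n
      ≤ (gammaNNs G : ℝ) := by
  -- the defining set of `gammaNNs` contains its infimum
  have hne' : Set.Nonempty {w : ℤ | ∃ f : V → ℤ, IsNNSDF G f ∧ w = ∑ v, f v} :=
    ⟨∑ v : V, (1 : ℤ), fun _ => 1, ⟨fun _ => Or.inl rfl, fun v => by simp⟩, rfl⟩
  have hbdd : BddBelow {w : ℤ | ∃ f : V → ℤ, IsNNSDF G f ∧ w = ∑ v, f v} := by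
    refine ⟨-(Fintype.card V : ℤ), ?_⟩
    rintro w ⟨f, ⟨hf1, hf2⟩, rfl⟩
    have : ∑ v : V, (-1 : ℤ) ≤ ∑ v, f v :=
      Finset.sum_le_sum fun v _ => by rcases hf1 v with h | h <;> omega
    simpa using this
  obtain ⟨f, ⟨hf1, hf2⟩, hw⟩ := Int.csInf_mem hne' hbdd
  rw [gammaNNs, hw]
  clear hw
  -- notation
  set P : Finset V := univ.filter (fun u => f u = 1) with hP
  set M : Finset V := univ.filter (fun u => f u = -1) with hM
  have hpm : P.card + M.card = Fintype.card V := by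
    rw [hP, hM, ← card_eq_cards hf1 univ]; rfl
  have hsumf : ∑ v, f v = (P.card : ℤ) - M.card := sum_eq_cards hf1 univ
  -- every closed neighborhood has at most 2|P| vertices
  have hdeg2p : ∀ u : V, (G.degree u : ℤ) + 1 ≤ 2 * P.card := by
    intro u
    have h0 : (0 : ℤ) ≤ ((closedNbr G u).filter (fun x => f x = 1)).card -
        ((closedNbr G u).filter (fun x => f x = -1)).card := by
      rw [← sum_eq_cards hf1]; exact hf2 u
    have hc : (closedNbr G u).card =
        ((closedNbr G u).filter (fun x => f x = 1)).card +
        ((closedNbr G u).filter (fun x => f x = -1)).card := card_eq_cards hf1 _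
    have ha : ((closedNbr G u).filter (fun x => f x = 1)).card ≤ P.card :=
      card_le_card (filter_subset_filter _ (subset_univ _))
    have hcd := closedNbr_card G u
    push_cast
    omega
  -- parity: even-degree vertices contribute at least 1
  have hparity : ∀ v : V, Even (G.degree v) → 1 ≤ ∑ u ∈ closedNbr G v, f u := by
    intro v hv
    have hc : (closedNbr G v).card =
        ((closedNbr G v).filter (fun x => f x = 1)).card +
        ((closedNbr G v).filter (fun x => f x = -1)).card := card_eq_cards hf1 _
    have hcd := closedNbr_card G v
    have h0 := hf2 v
    rw [sum_eq_cards hf1] at h0 ⊢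
    obtain ⟨k, hk⟩ := hv
    omega
  -- double counting
  have hdc : ∑ v, ∑ u ∈ closedNbr G v, f u = ∑ u, f u * ((G.degree u : ℤ) + 1) := by
    have step1 : ∀ v : V, ∑ u ∈ closedNbr G v, f u =
        ∑ u : V, if u ∈ closedNbr G v then f u else 0 := by
      intro v; rw [Finset.sum_ite_mem, univ_inter]
    calc ∑ v, ∑ u ∈ closedNbr G v, f u
        = ∑ v : V, ∑ u : V, if u ∈ closedNbr G v then f u else 0 := by
          exact Finset.sum_congr rfl fun v _ => step1 v
      _ = ∑ u : V, ∑ v : V, if u ∈ closedNbr G v then f u else 0 := Finset.sum_comm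
      _ = ∑ u : V, ∑ v : V, if v ∈ closedNbr G u then f u else 0 := by
          refine Finset.sum_congr rfl fun u _ => Finset.sum_congr rfl fun v _ => ?_
          simp only [mem_closedNbr_comm G u v]
      _ = ∑ u : V, f u * ((G.degree u : ℤ) + 1) := by
          refine Finset.sum_congr rfl fun u _ => ?_
          rw [Finset.sum_ite_mem, univ_inter, Finset.sum_const, closedNbr_card]
          push_cast; ring
  -- lower bound on the double sum
  have hlow : ((univ.filter fun v => Even (G.degree v)).card : ℤ) ≤
      ∑ v, ∑ u ∈ closedNbr G v, f u := by
    rw [← Finset.sum_filter_add_sum_filter_not univ (fun v => Even (G.degree v))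
      (fun v => ∑ u ∈ closedNbr G v, f u)]
    have h1 : ((univ.filter fun v => Even (G.degree v)).card : ℤ) ≤
        ∑ v ∈ univ.filter (fun v => Even (G.degree v)), ∑ u ∈ closedNbr G v, f u := by
      calc ((univ.filter fun v => Even (G.degree v)).card : ℤ)
          = ∑ v ∈ univ.filter (fun v => Even (G.degree v)), (1 : ℤ) := by simp
        _ ≤ _ := Finset.sum_le_sum fun v hv => hparity v (mem_filter.mp hv).2
    have h2 : (0 : ℤ) ≤ ∑ v ∈ univ.filter (fun v => ¬ Even (G.degree v)),
        ∑ u ∈ closedNbr G v, f u := Finset.sum_nonneg fun v _ => hf2 v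
    omega
  -- upper bound on the double sum
  have hup : ∑ u : V, f u * ((G.degree u : ℤ) + 1) ≤
      2 * (P.card : ℤ) * P.card - (M.card : ℤ) * ((G.minDegree : ℤ) + 1) := by
    rw [sum_pm hf1 univ (fun u => ((G.degree u : ℤ) + 1))]
    rw [← hP, ← hM]
    have hup1 : ∑ u ∈ P, ((G.degree u : ℤ) + 1) ≤ 2 * (P.card : ℤ) * P.card := by
      calc ∑ u ∈ P, ((G.degree u : ℤ) + 1) ≤ ∑ _u ∈ P, 2 * (P.card : ℤ) :=
            Finset.sum_le_sum fun u _ => hdeg2p u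
        _ = 2 * (P.card : ℤ) * P.card := by rw [Finset.sum_const]; push_cast; ring
    have hup2 : (M.card : ℤ) * ((G.minDegree : ℤ) + 1) ≤ ∑ u ∈ M, ((G.degree u : ℤ) + 1) := by
      calc (M.card : ℤ) * ((G.minDegree : ℤ) + 1)
          = ∑ _u ∈ M, ((G.minDegree : ℤ) + 1) := by rw [Finset.sum_const]; push_cast; ring
        _ ≤ _ := Finset.sum_le_sum fun u _ => by
            have := G.minDegree_le_degree u; push_cast; omega
    omega
  -- the key inequality
  have hkey : (nₑ : ℤ) + (M.card : ℤ) * ((δ : ℤ) + 1) ≤ 2 * (P.card : ℤ) * P.card := by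
    rw [hne, hδ]; push_cast
    omega
  -- final real arithmetic
  have hDle : ((δ : ℝ) + 1) ^ 2 + 8 * ((n : ℝ) * δ + n + nₑ) ≤
      (4 * (P.card : ℝ) + δ + 1) ^ 2 := by
    have hkeyR : (nₑ : ℝ) + (M.card : ℝ) * ((δ : ℝ) + 1) ≤ 2 * (P.card : ℝ) * P.card := by
      exact_mod_cast hkey
    have hnR : (P.card : ℝ) + M.card = n := by rw [hn]; exact_mod_cast hpm
    nlinarith [hkeyR, hnR, Nat.cast_nonneg (α := ℝ) P.card, Nat.cast_nonneg (α := ℝ) M.card,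
      Nat.cast_nonneg (α := ℝ) δ]
  have hsqrt : Real.sqrt (((δ : ℝ) + 1) ^ 2 + 8 * ((n : ℝ) * δ + n + nₑ)) ≤
      4 * (P.card : ℝ) + δ + 1 := by
    have h4 : (0 : ℝ) ≤ 4 * (P.card : ℝ) + δ + 1 := by positivity
    calc Real.sqrt (((δ : ℝ) + 1) ^ 2 + 8 * ((n : ℝ) * δ + n + nₑ))
        ≤ Real.sqrt ((4 * (P.card : ℝ) + δ + 1) ^ 2) := Real.sqrt_le_sqrt hDle
      _ = 4 * (P.card : ℝ) + δ + 1 := Real.sqrt_sq h4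
  have hsumfR : ((∑ v, f v : ℤ) : ℝ) = (P.card : ℝ) - M.card := by exact_mod_cast hsumf
  have hnR : (P.card : ℝ) + M.card = n := by rw [hn]; exact_mod_cast hpm
  rw [hsumfR]
  linarith [hsqrt]
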